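/- arXiv:1501.03737 — 2 statements merged into one kernel-verified Lean document; each statement's English description precedes it below -/
import Mathlib

section
/- For projectors Π_1, ..., Π_N and a density operator ρ on a finite-dimensional Hilbert space, 1 - Tr(Π_N ⋯ Π_1 ρ Π_1 ⋯ Π_N) ≤ 2 √(∑_{i=1}^N Tr((I - Π_i) ρ)). -/
open scoped ComplexOrder

/-- `Π_N ⋯ Π_1 ρ Π_1 ⋯ Π_N` for the family `P = (Π_1, …, Π_N)`. -/
noncomputable def sandwich {d N : ℕ} (P : Fin N → Matrix (Fin d) (Fin d) ℂ)
    (ρ : Matrix (Fin d) (Fin d) ℂ) : Matrix (Fin d) (Fin d) ℂ :=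
  ((List.finRange N).map P).reverse.prod * ρ * ((List.finRange N).map P).prod

/-!
Give matrices the (possibly degenerate) inner product `⟪X, Y⟫ = Tr(Y ρ Xᴴ)`
(`Matrix.toMatrixInnerProductSpace`). Left multiplication by a Hermitian projector is then an
orthogonal projection, `‖1‖ = 1`, `‖1 - Π_i‖² = Tr((I - Π_i) ρ)` and
`‖Π_N ⋯ Π_1‖² = Tr(Π_N ⋯ Π_1 ρ Π_1 ⋯ Π_N)`. In any inner product space, writing
`x - p q x = (x - p x) + p (x - q x)` as an orthogonal sum and using that `p` is a contraction
gives `‖x - p_N ⋯ p_1 x‖² ≤ ∑ ‖x - p_i x‖²`; finally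
`‖x‖² - ‖y‖² = (‖x‖ - ‖y‖)(‖x‖ + ‖y‖) ≤ 2 ‖x‖ ‖x - y‖` when `‖y‖ ≤ ‖x‖`.
-/

open Matrix

namespace LinearMap

variable {𝕜 E : Type*} [RCLike 𝕜] [SeminormedAddCommGroup E] [InnerProductSpace 𝕜 E]
  {p : E →ₗ[𝕜] E} {L : List (E →ₗ[𝕜] E)}

namespace IsSymmetricProjection

open scoped InnerProductSpace

theorem inner_sub_apply_apply (hp : p.IsSymmetricProjection) (x y : E) :
    ⟪x - p x, p y⟫_𝕜 = 0 := by
  rw [← hp.isSymmetric, map_sub, ← Module.End.mul_apply, hp.isIdempotentElem.eq, sub_self,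
    inner_zero_left]

theorem norm_sub_apply_add_apply_sq (hp : p.IsSymmetricProjection) (x y : E) :
    ‖x - p x + p y‖ ^ 2 = ‖x - p x‖ ^ 2 + ‖p y‖ ^ 2 := by
  simpa only [sq] using
    norm_add_sq_eq_norm_sq_add_norm_sq_of_inner_eq_zero _ _ (hp.inner_sub_apply_apply x y)

theorem norm_apply_le (hp : p.IsSymmetricProjection) (x : E) : ‖p x‖ ≤ ‖x‖ := by
  have h := hp.norm_sub_apply_add_apply_sq x x
  rw [sub_add_cancel] at h
  exact le_of_sq_le_sq (by nlinarith [sq_nonneg ‖x - p x‖]) (norm_nonneg x)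

end IsSymmetricProjection

theorem norm_list_prod_apply_le (hL : ∀ p ∈ L, p.IsSymmetricProjection) (x : E) :
    ‖L.prod x‖ ≤ ‖x‖ := by
  induction L with
  | nil => simp
  | cons p L ih =>
    rw [List.forall_mem_cons] at hL
    exact (hL.1.norm_apply_le _).trans (ih hL.2)

theorem norm_sub_list_prod_apply_sq_le (hL : ∀ p ∈ L, p.IsSymmetricProjection) (x : E) :
    ‖x - L.prod x‖ ^ 2 ≤ (L.map fun p ↦ ‖x - p x‖ ^ 2).sum := by
  induction L with
  | nil => simp
  | cons p L ih =>
    rw [List.forall_mem_cons] at hL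
    obtain ⟨hp, hL⟩ := hL
    have hsplit : x - (p :: L).prod x = x - p x + p (x - L.prod x) := by
      rw [List.prod_cons, Module.End.mul_apply, map_sub]; abel
    have hcontract := pow_le_pow_left₀ (norm_nonneg _) (hp.norm_apply_le (x - L.prod x)) 2
    rw [hsplit, hp.norm_sub_apply_add_apply_sq, List.map_cons, List.sum_cons]
    linarith [ih hL]

theorem norm_sq_sub_norm_list_prod_apply_sq_le (hL : ∀ p ∈ L, p.IsSymmetricProjection) (x : E) :
    ‖x‖ ^ 2 - ‖L.prod x‖ ^ 2 ≤ 2 * ‖x‖ * √(L.map fun p ↦ ‖x - p x‖ ^ 2).sum := by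
  have hdist : ‖x - L.prod x‖ ≤ √(L.map fun p ↦ ‖x - p x‖ ^ 2).sum :=
    Real.le_sqrt_of_sq_le (norm_sub_list_prod_apply_sq_le hL x)
  have hle := norm_list_prod_apply_le hL x
  have hrev : ‖x‖ - ‖L.prod x‖ ≤ ‖x - L.prod x‖ := norm_sub_norm_le _ _
  nlinarith [norm_nonneg (L.prod x)]

end LinearMap

namespace Matrix

variable {𝕜 n : Type*} [RCLike 𝕜] [Fintype n] {ρ : Matrix n n 𝕜}

theorem norm_sq_eq_re_trace_mul_mul_conjTranspose (hρ : ρ.PosSemidef) (X : Matrix n n 𝕜) :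
    letI := ρ.toMatrixSeminormedAddCommGroup hρ
    ‖X‖ ^ 2 = RCLike.re (X * ρ * Xᴴ).trace :=
  letI := ρ.toMatrixSeminormedAddCommGroup hρ
  letI := ρ.toMatrixInnerProductSpace hρ
  norm_sq_eq_re_inner (𝕜 := 𝕜) X

theorem norm_sq_eq_re_trace_mul_of_isStarProjection (hρ : ρ.PosSemidef) {q : Matrix n n 𝕜}
    (hq : IsStarProjection q) :
    letI := ρ.toMatrixSeminormedAddCommGroup hρ
    ‖q‖ ^ 2 = RCLike.re (q * ρ).trace := by
  rw [norm_sq_eq_re_trace_mul_mul_conjTranspose, trace_mul_cycle, ← star_eq_conjTranspose,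
    hq.isSelfAdjoint.star_eq, hq.isIdempotentElem.eq]

theorem isSymmetricProjection_lmul [DecidableEq n] (hρ : ρ.PosSemidef) {q : Matrix n n 𝕜}
    (hq : IsStarProjection q) :
    letI := ρ.toMatrixSeminormedAddCommGroup hρ
    letI := ρ.toMatrixInnerProductSpace hρ
    (Algebra.lmul 𝕜 (Matrix n n 𝕜) q).IsSymmetricProjection := by
  let := ρ.toMatrixSeminormedAddCommGroup hρ
  let := ρ.toMatrixInnerProductSpace hρ
  refine ⟨hq.isIdempotentElem.map _, fun X Y ↦ ?_⟩
  change (Y * ρ * (q * X)ᴴ).trace = (q * Y * ρ * Xᴴ).trace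
  rw [conjTranspose_mul, ← star_eq_conjTranspose q, hq.isSelfAdjoint.star_eq, ← mul_assoc,
    trace_mul_comm]
  simp only [mul_assoc]

end Matrix

theorem sandwich_eq_mul_mul_conjTranspose {d N : ℕ} (ρ : Matrix (Fin d) (Fin d) ℂ)
    {P : Fin N → Matrix (Fin d) (Fin d) ℂ} (hP : ∀ i, (P i).IsHermitian) :
    sandwich P ρ = ((List.finRange N).map P).reverse.prod * ρ *
      (((List.finRange N).map P).reverse.prod)ᴴ := by
  rw [sandwich, Matrix.conjTranspose_list_prod, List.map_reverse, List.reverse_reverse,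
    List.map_map]
  congr 3
  exact funext fun i ↦ (hP i).eq.symm

/-- Sen's non-commutative union bound: for orthogonal projectors
`Π_1, …, Π_N` and a density operator `ρ` on a finite-dimensional Hilbert space,
`1 − Tr(Π_N ⋯ Π_1 ρ Π_1 ⋯ Π_N) ≤ 2 √(∑_{i=1}^N Tr((I − Π_i) ρ))`. -/
theorem sen_noncommutative_union_bound {d N : ℕ}
    (ρ : Matrix (Fin d) (Fin d) ℂ) (hρ : ρ.PosSemidef) (hρtr : ρ.trace = 1)
    (P : Fin N → Matrix (Fin d) (Fin d) ℂ)
    (hproj : ∀ i, P i * P i = P i)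
    (hherm : ∀ i, (P i).IsHermitian) :
    1 - (sandwich P ρ).trace.re ≤
      2 * Real.sqrt (∑ i, (((1 - P i) * ρ).trace).re) := by
  let := ρ.toMatrixSeminormedAddCommGroup hρ
  let := ρ.toMatrixInnerProductSpace hρ
  have hP (i : Fin N) : IsStarProjection (P i) := ⟨hproj i, hherm i⟩
  set L := ((List.finRange N).map P).reverse.map (Algebra.lmul ℂ (Matrix (Fin d) (Fin d) ℂ))
  have hL : ∀ p ∈ L, p.IsSymmetricProjection := by
    simp only [L, List.mem_map, List.mem_reverse]
    rintro _ ⟨_, ⟨i, -, rfl⟩, rfl⟩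
    exact Matrix.isSymmetricProjection_lmul hρ (hP i)
  have hone : ‖(1 : Matrix (Fin d) (Fin d) ℂ)‖ = 1 := by
    have h := Matrix.norm_sq_eq_re_trace_mul_of_isStarProjection hρ (IsStarProjection.one _)
    rw [one_mul, hρtr, RCLike.one_re, pow_eq_one_iff_of_nonneg (norm_nonneg _) two_ne_zero] at h
    exact h
  have hprod : ‖L.prod 1‖ ^ 2 = (sandwich P ρ).trace.re := by
    rw [Matrix.norm_sq_eq_re_trace_mul_mul_conjTranspose hρ, ← map_list_prod,
      Algebra.coe_lmul_eq_mul, LinearMap.mul_apply', mul_one,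
      sandwich_eq_mul_mul_conjTranspose ρ hherm]
    rfl
  have hsum : (L.map fun p ↦ ‖1 - p 1‖ ^ 2).sum = ∑ i, ((1 - P i) * ρ).trace.re := by
    simp only [L, List.map_map, List.map_reverse, List.sum_reverse, Function.comp_def,
      Algebra.coe_lmul_eq_mul, LinearMap.mul_apply', mul_one,
      Matrix.norm_sq_eq_re_trace_mul_of_isStarProjection hρ (hP _).one_sub]
    rw [Fin.sum_univ_def]
    rfl
  have h := LinearMap.norm_sq_sub_norm_list_prod_apply_sq_le hL 1
  rwa [hone, hprod, hsum, one_pow, mul_one] at h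
end

section
/- For projectors Π_1, ..., Π_N and a density operator ρ on a finite-dimensional Hilbert space, 1 - Tr(Π_N ⋯ Π_1 ρ Π_1 ⋯ Π_N) ≤ 4 ∑_{i=1}^N Tr((I - Π_i) ρ). -/
open scoped ComplexOrder

/-!
Gao's operator inequality `1 - T* T ≤ 4 ∑ (1 - Πᵢ)` for `T = Π_N ⋯ Π_1` holds in any star-ordered
ring; the trace bound follows by pairing it with `ρ`, since `Tr (T ρ T*) = Tr (ρ T* T)`.
The operator inequality comes from the potential `4 S + 2 (T + T*) - T* T - 3`, where
`S = ∑ (1 - Πᵢ)`: it vanishes for the empty product, and multiplying `T` on the left by a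
projector `Π` (adding `1 - Π` to `S`) raises it by `(2 - T)* (1 - Π) (2 - T) ≥ 0`, because
`Π² = Π = Π*`. Finally `4 S - (1 - T* T)` is the potential plus `2 (1 - T)* (1 - T)`.
-/

lemma star_prod_reverse_of_isSelfAdjoint {M : Type*} [Monoid M] [StarMul M] {L : List M}
    (hL : ∀ p ∈ L, IsSelfAdjoint p) : star L.reverse.prod = L.prod := by
  induction L with
  | nil => simp
  | cons p L ih =>
    simp [ih fun q hq => hL q (List.mem_cons_of_mem p hq), (hL p List.mem_cons_self).star_eq]

section StarRing

variable {R : Type*} [Ring R] [StarRing R]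

def gaoPotential (s t : R) : R :=
  4 * s + 2 * (t + star t) - star t * t - 3

lemma gaoPotential_one_sub_add_mul {p : R} (hp : IsStarProjection p) (s b : R) :
    gaoPotential ((1 - p) + s) (p * b) = gaoPotential s b + star (2 - b) * (1 - p) * (2 - b) := by
  have hpp : star b * p * (p * b) = star b * p * b := by
    rw [mul_assoc, ← mul_assoc p, hp.isIdempotentElem.eq, ← mul_assoc]
  rw [gaoPotential, gaoPotential, star_mul, hp.isSelfAdjoint.star_eq, star_sub, star_ofNat, hpp,
    ← sub_eq_zero]
  noncomm_ring
  norm_num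

lemma four_mul_sub_one_sub_star_mul_self (s t : R) :
    4 * s - (1 - star t * t) = gaoPotential s t + 2 * (star (1 - t) * (1 - t)) := by
  rw [gaoPotential, star_sub, star_one, ← sub_eq_zero]
  noncomm_ring
  norm_num

variable [PartialOrder R] [StarOrderedRing R]

lemma gaoPotential_nonneg {L : List R} (hL : ∀ p ∈ L, IsStarProjection p) :
    0 ≤ gaoPotential (L.map (1 - ·)).sum L.prod := by
  induction L with
  | nil => norm_num [gaoPotential]
  | cons p L ih =>
    rw [List.map_cons, List.sum_cons, List.prod_cons, gaoPotential_one_sub_add_mul]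
    · exact add_nonneg (ih fun q hq => hL q (List.mem_cons_of_mem p hq))
        (star_left_conjugate_nonneg (hL p List.mem_cons_self).one_sub.nonneg _)
    · exact hL p List.mem_cons_self

theorem one_sub_star_prod_mul_prod_le {L : List R} (hL : ∀ p ∈ L, IsStarProjection p) :
    1 - star L.prod * L.prod ≤ 4 * (L.map (1 - ·)).sum := by
  rw [← sub_nonneg, four_mul_sub_one_sub_star_mul_self, two_mul]
  exact add_nonneg (gaoPotential_nonneg hL)
    (add_nonneg (star_mul_self_nonneg _) (star_mul_self_nonneg _))

theorem one_sub_prod_mul_prod_reverse_le {L : List R} (hL : ∀ p ∈ L, IsStarProjection p) :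
    1 - L.prod * L.reverse.prod ≤ 4 * (L.map (1 - ·)).sum := by
  have hstar : star L.reverse.prod = L.prod :=
    star_prod_reverse_of_isSelfAdjoint fun p hp => (hL p hp).isSelfAdjoint
  have hrev : ∀ p ∈ L.reverse, IsStarProjection p := fun p hp => hL p (List.mem_reverse.mp hp)
  simpa only [hstar, List.map_reverse, List.sum_reverse] using one_sub_star_prod_mul_prod_le hrev

end StarRing

open scoped MatrixOrder

namespace Matrix

variable {n 𝕜 : Type*} [Fintype n] [RCLike 𝕜]

lemma PosSemidef.trace_mul_nonneg {A B : Matrix n n 𝕜} (hA : A.PosSemidef) (hB : B.PosSemidef) :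
    0 ≤ (A * B).trace := by
  classical
  obtain ⟨C, rfl⟩ := CStarAlgebra.nonneg_iff_eq_star_mul_self.mp hB.nonneg
  rw [star_eq_conjTranspose, ← mul_assoc, trace_mul_cycle]
  exact (hA.mul_mul_conjTranspose_same C).trace_nonneg

lemma PosSemidef.trace_mul_le_trace_mul {ρ A B : Matrix n n 𝕜} (hρ : ρ.PosSemidef) (hAB : A ≤ B) :
    (ρ * A).trace ≤ (ρ * B).trace := by
  rw [← sub_nonneg, ← trace_sub, ← mul_sub]
  exact hρ.trace_mul_nonneg (le_iff.mp hAB)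

end Matrix

/-- Gao's union bound: for orthogonal projectors
`Π_1, …, Π_N` and a density operator `ρ` on a finite-dimensional Hilbert space,
`1 − Tr(Π_N ⋯ Π_1 ρ Π_1 ⋯ Π_N) ≤ 4 ∑_{i=1}^N Tr((I − Π_i) ρ)`. -/
theorem gao_noncommutative_union_bound {d N : ℕ}
    (ρ : Matrix (Fin d) (Fin d) ℂ) (hρ : ρ.PosSemidef) (hρtr : ρ.trace = 1)
    (P : Fin N → Matrix (Fin d) (Fin d) ℂ)
    (hproj : ∀ i, P i * P i = P i)
    (hherm : ∀ i, (P i).IsHermitian) :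
    1 - (sandwich P ρ).trace.re ≤
      4 * ∑ i, (((1 - P i) * ρ).trace).re := by
  set L := (List.finRange N).map P
  have hL : ∀ p ∈ L, IsStarProjection p := by
    simp only [L, List.mem_map, List.mem_finRange, true_and, forall_exists_index,
      forall_apply_eq_imp_iff]
    exact fun i => ⟨hproj i, hherm i⟩
  have hsandwich : (sandwich P ρ).trace = (ρ * (L.prod * L.reverse.prod)).trace := by
    rw [sandwich, Matrix.trace_mul_cycle, Matrix.trace_mul_comm]
  have hsum : (ρ * (4 * (L.map (1 - ·)).sum)).trace = 4 * ∑ i, ((1 - P i) * ρ).trace := by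
    rw [List.map_map, ← Fin.sum_univ_def, Matrix.trace_mul_comm, mul_assoc, Finset.sum_mul,
      ← Nat.cast_ofNat, ← nsmul_eq_mul, Matrix.trace_smul, nsmul_eq_mul, Matrix.trace_sum]
    rfl
  have key := hρ.trace_mul_le_trace_mul (one_sub_prod_mul_prod_reverse_le hL)
  rw [mul_sub, mul_one, Matrix.trace_sub, hρtr, ← hsandwich, hsum] at key
  simpa using (Complex.le_def.mp key).1
end
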